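/- arXiv:2512.22497 — 3 statements merged into one kernel-verified Lean document; each statement's English description precedes it below -/
import Mathlib

section
/- If T is a bounded linear operator on a complex Banach space with T^n = T for some n ≥ 2, then every element of the spectrum of T is an eigenvalue, i.e., σ(T) = σ_p(T). -/
/-!
Since `T ^ n = T` with `n ≥ 2`, `T` is annihilated by the monic polynomial `X ^ n - X`, so it is
algebraic. Every spectral value `μ` of an algebraic element is a root of its minimal polynomial
`m = (X - μ) q`. By minimality `q(T) ≠ 0`, while `(T - μ) q(T) = m(T) = 0`, so every nonzero vector
in the range of `q(T)` is an eigenvector for `μ`.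
-/

open Polynomial

theorem isIntegral_of_pow_eq_self {R A : Type*} [CommRing R] [Nontrivial R] [Ring A]
    [Algebra R A] {a : A} {n : ℕ} (hn : 2 ≤ n) (ha : a ^ n = a) : IsIntegral R a :=
  ⟨X ^ n - X, monic_X_pow_sub (by rw [degree_X]; exact_mod_cast hn), by simp [ha]⟩

namespace spectrum

variable {𝕜 A : Type*} [Field 𝕜] [Ring A] [Algebra 𝕜 A]

theorem isRoot_of_aeval_eq_zero {a : A} {p : 𝕜[X]} (hp : aeval a p = 0) {μ : 𝕜}
    (hμ : μ ∈ spectrum 𝕜 a) : p.IsRoot μ := by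
  have : Nontrivial A := not_subsingleton_iff_nontrivial.1 fun _ => by
    simp [of_subsingleton] at hμ
  simpa [hp] using subset_polynomial_aeval a p ⟨μ, hμ, rfl⟩

theorem exists_sub_algebraMap_mul_eq_zero_of_isIntegral {a : A} (ha : IsIntegral 𝕜 a) {μ : 𝕜}
    (hμ : μ ∈ spectrum 𝕜 a) : ∃ b ≠ 0, (a - algebraMap 𝕜 A μ) * b = 0 := by
  obtain ⟨q, hq⟩ := dvd_iff_isRoot.2 (isRoot_of_aeval_eq_zero (minpoly.aeval 𝕜 a) hμ)
  have hq_monic : q.Monic := (monic_X_sub_C μ).of_mul_monic_left (hq ▸ minpoly.monic ha)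
  refine ⟨aeval a q, minpoly.aeval_ne_zero_of_dvdNotUnit_minpoly ha hq_monic ?_, ?_⟩
  · exact ⟨hq_monic.ne_zero, X - C μ, not_isUnit_X_sub_C μ, hq.trans (mul_comm _ _)⟩
  · have : aeval a (X - C μ) = a - algebraMap 𝕜 A μ := by simp
    rw [← this, ← map_mul, ← hq, minpoly.aeval]

end spectrum

namespace ContinuousLinearMap

variable {M : Type*} [TopologicalSpace M] [AddCommGroup M] [IsTopologicalAddGroup M]

theorem mem_spectrum_of_apply_eq_smul {R : Type*} [CommRing R] [Module R M]
    [ContinuousConstSMul R M] {T : M →L[R] M} {μ : R} {x : M} (hx : x ≠ 0)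
    (hTx : T x = μ • x) : μ ∈ spectrum R T := by
  rintro ⟨u, hu⟩
  apply hx
  calc x = (↑u⁻¹ * ↑u : M →L[R] M) x := by simp
    _ = 0 := by simp [hu, hTx, Algebra.algebraMap_eq_smul_one]

theorem spectrum_eq_setOf_exists_apply_eq_smul_of_isIntegral {𝕜 : Type*} [Field 𝕜] [Module 𝕜 M]
    [ContinuousConstSMul 𝕜 M] {T : M →L[𝕜] M} (hT : IsIntegral 𝕜 T) :
    spectrum 𝕜 T = {μ : 𝕜 | ∃ x : M, x ≠ 0 ∧ T x = μ • x} := by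
  refine Set.Subset.antisymm (fun μ hμ => ?_) fun μ ⟨x, hx, hTx⟩ =>
    mem_spectrum_of_apply_eq_smul hx hTx
  obtain ⟨S, hS, hTS⟩ := spectrum.exists_sub_algebraMap_mul_eq_zero_of_isIntegral hT hμ
  obtain ⟨x, hx⟩ := DFunLike.ne_iff.1 hS
  exact ⟨S x, hx, by
    simpa [Algebra.algebraMap_eq_smul_one, sub_eq_zero] using DFunLike.congr_fun hTS x⟩

end ContinuousLinearMap

theorem npotent_spectrum_eq_point_spectrum_general
    {X : Type*} [NormedAddCommGroup X] [NormedSpace ℂ X]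
    (T : X →L[ℂ] X) (n : ℕ) (hn : 2 ≤ n) (hT : T ^ n = T) :
    spectrum ℂ T = {lam : ℂ | ∃ x : X, x ≠ 0 ∧ T x = lam • x} :=
  ContinuousLinearMap.spectrum_eq_setOf_exists_apply_eq_smul_of_isIntegral
    (isIntegral_of_pow_eq_self hn hT)

theorem npotent_spectrum_eq_point_spectrum
    {X : Type*} [NormedAddCommGroup X] [NormedSpace ℂ X] [CompleteSpace X]
    (T : X →L[ℂ] X) (n : ℕ) (hn : 2 ≤ n) (hT : T ^ n = T) :
    spectrum ℂ T = {lam : ℂ | ∃ x : X, x ≠ 0 ∧ T x = lam • x} :=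
  npotent_spectrum_eq_point_spectrum_general T n hn hT
end

section
/- Let n ≥ 2 and T a bounded operator on a complex Banach space with T^n = T. Let ω = e^{2πi/(n-1)}. For each j, define P_j = (1/(n-1)) Σ_{k=1}^{n-1} ω^{-jk} T^k. Then P_j is a projection (P_j^2 = P_j), P_j commutes with T, and T P_j = ω^j P_j. -/
/-!
Write `S = ∑_{k=1}^{N} μ⁻ᵏ Tᵏ` with `N = n - 1` and `μ = ωʲ`, so that `Tᴺ⁺¹ = T`
and `μᴺ = 1`. Multiplying by `T` shifts the sum by one step,
`T (μ⁻ᵏ Tᵏ) = μ (μ⁻⁽ᵏ⁺¹⁾ Tᵏ⁺¹)`, and the sum telescopes because the term for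
`k = N + 1` equals the one for `k = 1`; hence `T S = μ S`. Then `Tᵏ S = μᵏ S`, so each
of the `N` summands of `S · S` contributes `S`, giving `S² = N S` and `P = N⁻¹ S`
idempotent.
-/

open Finset

section TwistedPowerSum

variable {K A : Type*} [Field K] [Ring A] [Algebra K A]

def twistedPowerSum (T : A) (μ : K) (N : ℕ) : A :=
  ∑ k ∈ Icc 1 N, (μ ^ k)⁻¹ • T ^ k

theorem commute_twistedPowerSum (T : A) (μ : K) (N : ℕ) :
    Commute T (twistedPowerSum T μ N) :=
  Commute.sum_right _ _ _ fun k _ => ((Commute.refl T).pow_right k).smul_right _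

theorem mul_twistedPowerSum {T : A} {μ : K} {N : ℕ} (hT : T ^ (N + 1) = T) (hμ : μ ^ N = 1) :
    T * twistedPowerSum T μ N = μ • twistedPowerSum T μ N := by
  rcases Nat.eq_zero_or_pos N with rfl | hN
  · simp [twistedPowerSum]
  have hμ0 : μ ≠ 0 := ne_zero_pow hN.ne' (hμ ▸ one_ne_zero)
  set g : ℕ → A := fun k => (μ ^ k)⁻¹ • T ^ k
  have hshift : ∀ k, T * g k = μ • g (k + 1) := fun k => by
    rw [mul_smul_comm, ← pow_succ', smul_smul, pow_succ' μ, mul_inv, mul_inv_cancel_left₀ hμ0]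
  have hwrap : g (N + 1) = g 1 := by simp only [g, hT, pow_succ μ N, hμ, one_mul, pow_one]
  rw [← sub_eq_zero]
  calc T * twistedPowerSum T μ N - μ • twistedPowerSum T μ N
      = μ • ∑ k ∈ Icc 1 N, (g (k + 1) - g k) := by
        simp only [twistedPowerSum, mul_sum, hshift, sum_sub_distrib, smul_sub, smul_sum, g]
    _ = 0 := by rw [sum_Icc_sub hN, hwrap, sub_self, smul_zero]

theorem pow_mul_eq_smul_of_mul_eq_smul {a s : A} {c : K} (h : a * s = c • s) (k : ℕ) :
    a ^ k * s = c ^ k • s := by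
  induction k with
  | zero => simp
  | succ k ih => rw [pow_succ', mul_assoc, ih, mul_smul_comm, h, smul_smul, ← pow_succ]

theorem twistedPowerSum_mul_self {T : A} {μ : K} {N : ℕ} (hT : T ^ (N + 1) = T)
    (hμ : μ ^ N = 1) :
    twistedPowerSum T μ N * twistedPowerSum T μ N = (N : K) • twistedPowerSum T μ N := by
  have hpow := pow_mul_eq_smul_of_mul_eq_smul (mul_twistedPowerSum hT hμ)
  have hterm : ∀ k ∈ Icc 1 N, (μ ^ k)⁻¹ • T ^ k * twistedPowerSum T μ N
      = twistedPowerSum T μ N := fun k hk => by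
    have hμ0 : μ ≠ 0 := ne_zero_pow (by grind) (hμ ▸ one_ne_zero)
    rw [smul_mul_assoc, hpow, smul_smul, inv_mul_cancel₀ (pow_ne_zero k hμ0), one_smul]
  conv_lhs => enter [1]; rw [twistedPowerSum]
  rw [sum_mul, sum_congr rfl hterm, sum_const, Nat.card_Icc, Nat.add_sub_cancel,
    Nat.cast_smul_eq_nsmul]

theorem isIdempotentElem_inv_smul_twistedPowerSum {T : A} {μ : K} {N : ℕ}
    (hT : T ^ (N + 1) = T) (hμ : μ ^ N = 1) :
    IsIdempotentElem ((N : K)⁻¹ • twistedPowerSum T μ N) := by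
  rw [IsIdempotentElem, smul_mul_smul_comm, twistedPowerSum_mul_self hT hμ, smul_smul]
  congr 1
  simpa using mul_self_mul_inv (N : K)⁻¹

end TwistedPowerSum

theorem npotent_riesz_projection_properties_general
    {X : Type*} [NormedAddCommGroup X] [NormedSpace ℂ X]
    (T : X →L[ℂ] X) (n : ℕ) (hn : 2 ≤ n) (hT : T ^ n = T)
    (ω : ℂ) (hω : IsPrimitiveRoot ω (n - 1))
    (j : ℕ)
    (P : X →L[ℂ] X)
    (hP : P = ((n : ℂ) - 1)⁻¹ • ∑ k ∈ Finset.Icc 1 (n - 1), (ω ^ (j * k))⁻¹ • T ^ k) :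
    P * P = P ∧ T * P = P * T ∧ T * P = ω ^ j • P := by
  obtain ⟨N, rfl⟩ : ∃ N, n = N + 1 := ⟨n - 1, by omega⟩
  have hμ : (ω ^ j) ^ N = 1 := by rw [pow_right_comm, ← Nat.add_sub_cancel N 1, hω.pow_eq_one, one_pow]
  replace hP : P = (N : ℂ)⁻¹ • twistedPowerSum T (ω ^ j) N := by
    simpa [twistedPowerSum, pow_mul] using hP
  subst hP
  refine ⟨isIdempotentElem_inv_smul_twistedPowerSum hT hμ,
    ((commute_twistedPowerSum T _ N).smul_right _).eq, ?_⟩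
  rw [mul_smul_comm, mul_twistedPowerSum hT hμ, smul_comm]

theorem npotent_riesz_projection_properties
    {X : Type*} [NormedAddCommGroup X] [NormedSpace ℂ X] [CompleteSpace X]
    (T : X →L[ℂ] X) (n : ℕ) (hn : 2 ≤ n) (hT : T ^ n = T)
    (ω : ℂ) (hω : IsPrimitiveRoot ω (n - 1))
    (j : ℕ) (hj : j ≤ n - 2)
    (P : X →L[ℂ] X)
    (hP : P = ((n : ℂ) - 1)⁻¹ • ∑ k ∈ Finset.Icc 1 (n - 1), (ω ^ (j * k))⁻¹ • T ^ k) :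
    P * P = P ∧ T * P = P * T ∧ T * P = ω ^ j • P :=
  npotent_riesz_projection_properties_general T n hn hT ω hω j P hP
end

section
/- Let n ≥ 2, T bounded on a complex Banach space with T^n = T, ω a primitive (n-1)-th root of unity, and P_j = (1/(n-1)) Σ_{k=1}^{n-1} ω^{-jk} T^k. Then ω^j is an eigenvalue of T if and only if P_j ≠ 0. -/
/-!
Put `ζ = ω ^ j`, `m = n - 1` and `S = ∑_{k=1}^m ζ⁻ᵏ Tᵏ`, so that `P = S / m`. Multiplying `S` by `T`
shifts the summation index by one; since `T ^ (m + 1) = T` and `ζ ^ m = 1` the shift is cyclic,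
whence `T S = ζ S` and every nonzero vector in the range of `P` is an eigenvector for `ζ`.
Conversely every term of `S` fixes an eigenvector `x` for `ζ`, so `P x = x`.
-/

theorem Finset.sum_Icc_one_eq_sum_range {M : Type*} [AddCommMonoid M] (f : ℕ → M) (m : ℕ) :
    ∑ k ∈ Icc 1 m, f k = ∑ k ∈ range m, f (k + 1) := by
  rw [← Ico_add_one_right_eq_Icc, sum_Ico_eq_sum_range, add_tsub_cancel_right]
  simp only [add_comm]

theorem Finset.sum_Icc_one_comp_succ {M : Type*} [AddCommMonoid M] [IsRightCancelAdd M]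
    {f : ℕ → M} {m : ℕ} (h : f (m + 1) = f 1) :
    ∑ k ∈ Icc 1 m, f (k + 1) = ∑ k ∈ Icc 1 m, f k := by
  simp only [sum_Icc_one_eq_sum_range]
  apply add_right_cancel (b := f 1)
  conv_rhs => rw [← h, ← sum_range_succ (fun k ↦ f (k + 1))]
  rw [sum_range_succ']

theorem mul_sum_Icc_inv_pow_smul_pow {𝕜 A : Type*} [Field 𝕜] [Ring A] [Algebra 𝕜 A] {T : A}
    {ζ : 𝕜} {m : ℕ} (hζ : ζ ^ m = 1) (hT : T ^ (m + 1) = T) :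
    T * ∑ k ∈ Finset.Icc 1 m, (ζ ^ k)⁻¹ • T ^ k = ζ • ∑ k ∈ Finset.Icc 1 m, (ζ ^ k)⁻¹ • T ^ k := by
  rcases m.eq_zero_or_pos with rfl | hm
  · simp
  have hζ0 : ζ ≠ 0 := by
    rintro rfl
    simp [zero_pow hm.ne'] at hζ
  have hstep (k : ℕ) : T * ((ζ ^ k)⁻¹ • T ^ k) = ζ • ((ζ ^ (k + 1))⁻¹ • T ^ (k + 1)) := by
    rw [mul_smul_comm, ← pow_succ', smul_smul, pow_succ ζ k, mul_inv, mul_left_comm,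
      mul_inv_cancel₀ hζ0, mul_one]
  rw [Finset.mul_sum, Finset.sum_congr rfl fun k _ ↦ hstep k, ← Finset.smul_sum,
    Finset.sum_Icc_one_comp_succ (f := fun k ↦ (ζ ^ k)⁻¹ • T ^ k)]
  rw [pow_succ, hζ, one_mul, hT, pow_one, pow_one]

theorem ContinuousLinearMap.sum_Icc_inv_pow_smul_pow_apply_of_apply_eq {𝕜 M : Type*} [Field 𝕜]
    [TopologicalSpace M] [AddCommMonoid M] [Module 𝕜 M] [ContinuousAdd M] [ContinuousConstSMul 𝕜 M]
    {T : M →L[𝕜] M} {ζ : 𝕜} {x : M} (hζ : ζ ≠ 0) (hx : T x = ζ • x) (m : ℕ) :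
    (∑ k ∈ Finset.Icc 1 m, (ζ ^ k)⁻¹ • T ^ k) x = (m : 𝕜) • x := by
  have hpow (k : ℕ) : (T ^ k) x = ζ ^ k • x := by
    induction k with
    | zero => simp
    | succ k ih => rw [pow_succ', mul_apply_eq_comp, ih, map_smul, hx, smul_smul, ← pow_succ]
  simp only [sum_apply, smul_apply, hpow, smul_smul, inv_mul_cancel₀ (pow_ne_zero _ hζ), one_smul,
    Finset.sum_const, Nat.card_Icc, add_tsub_cancel_right, Nat.cast_smul_eq_nsmul]

theorem npotent_eigenvalue_iff_projection_ne_zero_general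
    {X : Type*} [NormedAddCommGroup X] [NormedSpace ℂ X]
    (T : X →L[ℂ] X) (n : ℕ) (hn : 2 ≤ n) (hT : T ^ n = T)
    (ω : ℂ) (hω : IsPrimitiveRoot ω (n - 1))
    (j : ℕ)
    (P : X →L[ℂ] X)
    (hP : P = ((n : ℂ) - 1)⁻¹ • ∑ k ∈ Finset.Icc 1 (n - 1), (ω ^ (j * k))⁻¹ • T ^ k) :
    (∃ x : X, x ≠ 0 ∧ T x = ω ^ j • x) ↔ P ≠ 0 := by
  obtain ⟨m, rfl⟩ : ∃ m, n = m + 1 := ⟨n - 1, by omega⟩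
  have hm : (m : ℂ) ≠ 0 := by exact_mod_cast (by omega : m ≠ 0)
  simp only [add_tsub_cancel_right, Nat.cast_add, Nat.cast_one, add_sub_cancel_right, pow_mul]
    at hω hP
  have hζ : (ω ^ j) ^ m = 1 := by rw [← pow_mul, mul_comm, pow_mul, hω.pow_eq_one, one_pow]
  have hζ0 : ω ^ j ≠ 0 := pow_ne_zero _ (hω.ne_zero (by omega))
  subst hP
  constructor
  · rintro ⟨x, hx, hTx⟩ hP
    have hPx := congr($hP x)
    rw [smul_apply, ContinuousLinearMap.sum_Icc_inv_pow_smul_pow_apply_of_apply_eq hζ0 hTx,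
      smul_smul, inv_mul_cancel₀ hm, one_smul] at hPx
    exact hx hPx
  · intro hP
    obtain ⟨y, hy⟩ := DFunLike.ne_iff.1 hP
    refine ⟨_, hy, ?_⟩
    rw [← mul_apply_eq_comp, mul_smul_comm, mul_sum_Icc_inv_pow_smul_pow hζ hT, smul_comm]
    rfl

theorem npotent_eigenvalue_iff_projection_ne_zero
    {X : Type*} [NormedAddCommGroup X] [NormedSpace ℂ X] [CompleteSpace X]
    (T : X →L[ℂ] X) (n : ℕ) (hn : 2 ≤ n) (hT : T ^ n = T)
    (ω : ℂ) (hω : IsPrimitiveRoot ω (n - 1))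
    (j : ℕ) (hj : j ≤ n - 2)
    (P : X →L[ℂ] X)
    (hP : P = ((n : ℂ) - 1)⁻¹ • ∑ k ∈ Finset.Icc 1 (n - 1), (ω ^ (j * k))⁻¹ • T ^ k) :
    (∃ x : X, x ≠ 0 ∧ T x = ω ^ j • x) ↔ P ≠ 0 :=
  npotent_eigenvalue_iff_projection_ne_zero_general T n hn hT ω hω j P hP
end
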